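/- arXiv:1802.06872 — 4 statements merged into one kernel-verified Lean document; each statement's English description precedes it below -/
import Mathlib

section
/- For every integer ℓ ≥ 2 and every real number p with 1/11 ≤ p ≤ 10/11, p·ℓ + ℓ·(1−p)^ℓ ≤ (111/121)·ℓ. -/
/-- For every integer `ℓ ≥ 2` and every real `p` with `1/11 ≤ p ≤ 10/11`,
`p·ℓ + ℓ·(1-p)^ℓ ≤ (111/121)·ℓ`. -/
theorem stmt1 (ℓ : ℕ) (hℓ : 2 ≤ ℓ) (p : ℝ) (hp0 : 1 / 11 ≤ p) (hp1 : p ≤ 10 / 11) :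
    p * ℓ + ℓ * (1 - p) ^ ℓ ≤ (111 / 121) * ℓ := by
  have hL : (2:ℝ) ≤ (ℓ:ℝ) := by exact_mod_cast hℓ
  have h1 : (1 - p) ^ ℓ ≤ (1 - p) ^ 2 :=
    pow_le_pow_of_le_one (by linarith) (by linarith) hℓ
  have h2 : p + (1 - p) ^ 2 ≤ 111 / 121 := by nlinarith [mul_nonneg (by linarith : (0:ℝ) ≤ p - 1/11) (by linarith : (0:ℝ) ≤ 10/11 - p)]
  have hL0 : (0:ℝ) ≤ (ℓ:ℝ) := by linarith
  nlinarith [mul_le_mul_of_nonneg_left h1 hL0, mul_le_mul_of_nonneg_right h2 hL0]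
end

section
/- Let (Ω, F, P) be a probability space with a filtration (F_t)_{t∈ℕ}, and let (X_t)_{t∈ℕ} be an adapted, integrable process taking values in the positive integers with X_0 ≤ n almost surely, for some real n ≥ 1. Let δ ∈ (0,1). Assume that for every t: (i) almost everywhere on the event {X_t = 1} one has X_{t+1} = 1, and (ii) almost everywhere on the event {X_t ≥ 2} one has E[X_{t+1} | F_t] ≤ δ·X_t. Then for every t ∈ ℕ, P(X_t ≥ 2) ≤ δ^t · n. -/
open MeasureTheory

/-! The excess `Y_t = X_t - 1` is nonnegative and satisfies `E[Y_{t+1} | F_t] ≤ δ Y_t`: on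
`{X_t = 1}` both sides vanish because `1` is absorbing, and on `{X_t ≥ 2}` the drift gives
`E[X_{t+1} | F_t] - 1 ≤ δ X_t - 1 ≤ δ (X_t - 1)` as `δ ≤ 1`. Taking expectations,
`E[Y_t] ≤ δ^t E[Y_0] ≤ δ^t (n - 1)`, and Markov's inequality for `{Y_t ≥ 1} = {X_t ≥ 2}`
concludes. -/

theorem eq_one_or_two_le_of_eq_natCast {x : ℝ} {k : ℕ} (hk : 1 ≤ k) (hx : x = k) :
    x = 1 ∨ 2 ≤ x := by
  rcases hk.eq_or_lt with rfl | hk2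
  · simp [hx]
  · exact Or.inr (hx ▸ by exact_mod_cast hk2)

section

variable {Ω : Type*} {m m₀ : MeasurableSpace Ω} {μ : Measure Ω} [IsFiniteMeasure μ]

theorem ae_condExp_eq_const_of_ae_eq_const_on (hm : m ≤ m₀) {A : Set Ω}
    (hA : MeasurableSet[m] A) {f : Ω → ℝ} (hf : Integrable f μ) {c : ℝ}
    (hfA : ∀ᵐ ω ∂μ, ω ∈ A → f ω = c) :
    ∀ᵐ ω ∂μ, ω ∈ A → μ[f | m] ω = c := by
  have hind : A.indicator f =ᵐ[μ] A.indicator fun _ ↦ c := by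
    filter_upwards [hfA] with ω hω
    by_cases hωA : ω ∈ A <;> simp [hωA, hω]
  have hcond : A.indicator (μ[f | m]) =ᵐ[μ] A.indicator fun _ ↦ c :=
    calc A.indicator (μ[f | m])
        =ᵐ[μ] μ[A.indicator f | m] := (condExp_indicator hf hA).symm
      _ =ᵐ[μ] μ[A.indicator fun _ ↦ c | m] := condExp_congr_ae hind
      _ =ᵐ[μ] A.indicator (μ[fun _ ↦ c | m]) := condExp_indicator (integrable_const c) hA
      _ = A.indicator fun _ ↦ c := by rw [condExp_const hm]
  filter_upwards [hcond] with ω hω hωA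
  simpa [hωA] using hω

theorem condExp_sub_one_le_mul_sub_one (hm : m ≤ m₀) {f g : Ω → ℝ}
    (hf : Measurable[m] f) (hg : Integrable g μ) {δ : ℝ} (hδ : δ ≤ 1)
    (hcases : ∀ᵐ ω ∂μ, f ω = 1 ∨ 2 ≤ f ω)
    (habs : ∀ᵐ ω ∂μ, f ω = 1 → g ω = 1)
    (hdrift : ∀ᵐ ω ∂μ, 2 ≤ f ω → μ[g | m] ω ≤ δ * f ω) :
    μ[fun ω ↦ g ω - 1 | m] ≤ᵐ[μ] fun ω ↦ δ * (f ω - 1) := by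
  have hsub : μ[fun ω ↦ g ω - 1 | m] =ᵐ[μ] fun ω ↦ μ[g | m] ω - 1 := by
    have h := condExp_sub hg (integrable_const (1 : ℝ)) m
    rwa [condExp_const hm] at h
  have habs' := ae_condExp_eq_const_of_ae_eq_const_on hm
    (hf (measurableSet_singleton 1)) hg habs
  filter_upwards [hsub, habs', hdrift, hcases] with ω hω hone htwo hcase
  rw [hω]
  rcases hcase with h1 | h2
  · simp [h1, hone h1]
  · nlinarith [htwo h2]

theorem integral_le_pow_mul_integral_of_condExp_le (ℱ : Filtration ℕ m₀)
    {Y : ℕ → Ω → ℝ} (hY : ∀ t, Integrable (Y t) μ) {δ : ℝ} (hδ : 0 ≤ δ)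
    (hdrift : ∀ t, μ[Y (t + 1) | ℱ t] ≤ᵐ[μ] fun ω ↦ δ * Y t ω) (t : ℕ) :
    ∫ ω, Y t ω ∂μ ≤ δ ^ t * ∫ ω, Y 0 ω ∂μ := by
  induction t with
  | zero => simp
  | succ t ih =>
    calc ∫ ω, Y (t + 1) ω ∂μ
        = ∫ ω, (μ[Y (t + 1) | ℱ t]) ω ∂μ := (integral_condExp (ℱ.le t)).symm
      _ ≤ ∫ ω, δ * Y t ω ∂μ :=
        integral_mono_ae integrable_condExp ((hY t).const_mul δ) (hdrift t)
      _ = δ * ∫ ω, Y t ω ∂μ := integral_const_mul δ _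
      _ ≤ δ * (δ ^ t * ∫ ω, Y 0 ω ∂μ) := mul_le_mul_of_nonneg_left ih hδ
      _ = δ ^ (t + 1) * ∫ ω, Y 0 ω ∂μ := by ring

end

theorem stmt2_general {Ω : Type*} {m : MeasurableSpace Ω} {μ : Measure Ω} [IsProbabilityMeasure μ]
    (ℱ : Filtration ℕ m) (X : ℕ → Ω → ℝ)
    (hadapted : Adapted ℱ X)
    (hint : ∀ t, Integrable (X t) μ)
    (hposint : ∀ t, ∀ᵐ ω ∂μ, ∃ k : ℕ, 1 ≤ k ∧ X t ω = (k : ℝ))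
    (n : ℝ)
    (h0 : ∀ᵐ ω ∂μ, X 0 ω ≤ n)
    (δ : ℝ) (hδ0 : 0 < δ) (hδ1 : δ < 1)
    (habs : ∀ t, ∀ᵐ ω ∂μ, X t ω = 1 → X (t + 1) ω = 1)
    (hdrift : ∀ t, ∀ᵐ ω ∂μ, 2 ≤ X t ω → (μ[X (t + 1) | ℱ t]) ω ≤ δ * X t ω) :
    ∀ t, μ {ω | 2 ≤ X t ω} ≤ ENNReal.ofReal (δ ^ t * n) := by
  have hcases t : ∀ᵐ ω ∂μ, X t ω = 1 ∨ 2 ≤ X t ω := by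
    filter_upwards [hposint t] with ω ⟨k, hk, hXk⟩
    exact eq_one_or_two_le_of_eq_natCast hk hXk
  have hY_int t : Integrable (fun ω ↦ X t ω - 1) μ := (hint t).sub (integrable_const 1)
  have hY0 : ∫ ω, X 0 ω - 1 ∂μ ≤ n - 1 := by
    simpa using integral_mono_ae (hY_int 0) (integrable_const (n - 1))
      (h0.mono fun ω hω ↦ by linarith)
  have hY_drift t :
      μ[fun ω ↦ X (t + 1) ω - 1 | ℱ t] ≤ᵐ[μ] fun ω ↦ δ * (X t ω - 1) :=
    condExp_sub_one_le_mul_sub_one (ℱ.le t) (hadapted t) (hint (t + 1)) hδ1.le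
      (hcases t) (habs t) (hdrift t)
  intro t
  have hY_nonneg : 0 ≤ᵐ[μ] fun ω ↦ X t ω - 1 := by
    filter_upwards [hcases t] with ω hω
    rcases hω with h | h <;> simp only [Pi.zero_apply] <;> linarith
  calc μ {ω | 2 ≤ X t ω}
      ≤ ENNReal.ofReal (∫ ω, X t ω - 1 ∂μ) :=
        (hY_int t).measure_le_integral hY_nonneg fun ω (hω : 2 ≤ X t ω) ↦ by linarith
    _ ≤ ENNReal.ofReal (δ ^ t * ∫ ω, X 0 ω - 1 ∂μ) := by
      gcongr
      exact integral_le_pow_mul_integral_of_condExp_le ℱ hY_int hδ0.le hY_drift t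
    _ ≤ ENNReal.ofReal (δ ^ t * n) := by gcongr; linarith

/-- Multiplicative-drift tail bound. Let `(X_t)` be an adapted, integrable
process on a filtered probability space, taking values in the positive integers, with
`X_0 ≤ n` a.s. (`n ≥ 1`) and `δ ∈ (0,1)`. If `1` is an absorbing state and
`E[X_{t+1} | F_t] ≤ δ·X_t` a.e. on `{X_t ≥ 2}`, then `P(X_t ≥ 2) ≤ δ^t · n` for all `t`. -/
theorem stmt2 {Ω : Type*} {m : MeasurableSpace Ω} {μ : Measure Ω} [IsProbabilityMeasure μ]
    (ℱ : Filtration ℕ m) (X : ℕ → Ω → ℝ)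
    (hadapted : Adapted ℱ X)
    (hint : ∀ t, Integrable (X t) μ)
    (hposint : ∀ t, ∀ᵐ ω ∂μ, ∃ k : ℕ, 1 ≤ k ∧ X t ω = (k : ℝ))
    (n : ℝ) (hn : 1 ≤ n)
    (h0 : ∀ᵐ ω ∂μ, X 0 ω ≤ n)
    (δ : ℝ) (hδ0 : 0 < δ) (hδ1 : δ < 1)
    (habs : ∀ t, ∀ᵐ ω ∂μ, X t ω = 1 → X (t + 1) ω = 1)
    (hdrift : ∀ t, ∀ᵐ ω ∂μ, 2 ≤ X t ω → (μ[X (t + 1) | ℱ t]) ω ≤ δ * X t ω) :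
    ∀ t, μ {ω | 2 ≤ X t ω} ≤ ENNReal.ofReal (δ ^ t * n) :=
  stmt2_general ℱ X hadapted hint hposint n h0 δ hδ0 hδ1 habs hdrift
end

section
/- Fix integers n ≥ 1 and ℓ₀ with 1 ≤ ℓ₀ ≤ n. Define a step distribution step : ℕ → PMF ℕ by letting step(ℓ) be the law of the random variable (B if B ≥ 1, else ℓ), where B is binomial with ℓ trials and success probability 1/2; i.e., step(ℓ) is the pushforward of the binomial(ℓ, 1/2) distribution under b ↦ if b ≥ 1 then b else ℓ. Let μ_0 be the point mass at ℓ₀ and μ_{t+1} = μ_t.bind(step). Then for every t ∈ ℕ, μ_t({1}) ≥ 1 − n·(3/4)^t. In particular, for every c > 0 and every t ≥ (c+1)·ln n / ln(4/3), μ_t({1}) ≥ 1 − n^{−c}. -/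
/-!
Track the potential `ℓ - 1` (the number of surplus leaders). From `ℓ ≥ 1` leaders one round
leaves `B ~ Bin(ℓ, 1/2)` leaders, or `ℓ` if `B = 0`, so the expected potential after the round is
`ℓ/2 - 1 + ℓ/2^ℓ ≤ (3/4)(ℓ - 1)`. Iterating, the expected potential at time `t` is at most
`(ℓ₀ - 1)(3/4)^t`. The chain never reaches `0` and the potential is at least `1` on every state
`≥ 2`, so by Markov's inequality the chain is away from `1` with probability at most
`(ℓ₀ - 1)(3/4)^t ≤ n (3/4)^t`. For the second bound, `n (3/4)^t ≤ n^(-c)` is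
`(c + 1) log n ≤ t log(4/3)` after taking logarithms.
-/

open scoped ENNReal
open Finset

set_option linter.deprecated false

namespace PMF

variable {α β : Type*}

theorem tsum_map_mul (p : PMF α) (f : α → β) (g : β → ℝ≥0∞) :
    ∑' b, p.map f b * g b = ∑' a, p a * g (f a) := by
  classical
  simp only [map_apply, ← ENNReal.tsum_mul_right]
  rw [ENNReal.tsum_comm]
  refine tsum_congr fun a => ?_
  rw [tsum_eq_single (f a) fun b hb => by simp [hb]]
  simp

theorem tsum_bind_mul (p : PMF α) (f : α → PMF β) (g : β → ℝ≥0∞) :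
    ∑' b, p.bind f b * g b = ∑' a, p a * ∑' b, f a b * g b := by
  simp only [bind_apply, ← ENNReal.tsum_mul_right, ← ENNReal.tsum_mul_left, mul_assoc]
  exact ENNReal.tsum_comm

theorem one_le_apply_add_tsum_mul (p : PMF α) (a : α) {g : α → ℝ≥0∞}
    (hg : ∀ x ∈ p.support, x ≠ a → 1 ≤ g x) : 1 ≤ p a + ∑' x, p x * g x := by
  classical
  have hpoint : ∀ x, p x ≤ (if x = a then p a else 0) + p x * g x := by
    intro x
    by_cases hxa : x = a
    · simp [hxa]
    by_cases hx : x ∈ p.support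
    · simpa [hxa] using mul_le_mul_right (hg x hx hxa) (p x)
    · simp [(mem_support_iff p x).not_left.mp hx]
  calc 1 = ∑' x, p x := p.tsum_coe.symm
    _ ≤ ∑' x, ((if x = a then p a else 0) + p x * g x) := ENNReal.tsum_le_tsum hpoint
    _ = p a + ∑' x, p x * g x := by rw [ENNReal.tsum_add, tsum_ite_eq]

theorem one_sub_toReal_le_toReal_apply (p : PMF α) (a : α) {g : α → ℝ≥0∞}
    (hg : ∀ x ∈ p.support, x ≠ a → 1 ≤ g x) {B : ℝ≥0∞} (hB : B ≠ ⊤)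
    (hE : ∑' x, p x * g x ≤ B) : 1 - B.toReal ≤ (p a).toReal := by
  have h := ENNReal.toReal_mono (ENNReal.add_ne_top.mpr ⟨p.apply_ne_top a, hB⟩)
    ((p.one_le_apply_add_tsum_mul a hg).trans (add_le_add_right hE _))
  rw [ENNReal.toReal_add (p.apply_ne_top a) hB, ENNReal.toReal_one] at h
  linarith

theorem binomial_half_apply (ℓ : ℕ) (b : Fin (ℓ + 1)) :
    binomial (1 / 2) (by norm_num) ℓ b = (2 ^ ℓ)⁻¹ * ℓ.choose b := by
  have half : ((1 / 2 : NNReal) : ℝ≥0∞) = 2⁻¹ := by simp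
  rw [binomial_apply, half, ENNReal.one_sub_inv_two, ← pow_add, Fin.val_last,
    Nat.add_sub_cancel' b.is_le, ENNReal.inv_pow]

end PMF

section MarkovChain

variable {α : Type*} {step : α → PMF α} {μ : ℕ → PMF α}

theorem support_subset_of_succ_eq_bind (hμ : ∀ t, μ (t + 1) = (μ t).bind step) {S : Set α}
    (h0 : (μ 0).support ⊆ S) (hS : ∀ a ∈ S, (step a).support ⊆ S) (t : ℕ) :
    (μ t).support ⊆ S := by
  induction t with
  | zero => exact h0
  | succ t ih =>
    rw [hμ, PMF.support_bind]
    exact Set.iUnion₂_subset fun a ha => hS a (ih ha)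

theorem tsum_mul_le_pow_mul_of_succ_eq_bind (hμ : ∀ t, μ (t + 1) = (μ t).bind step)
    {g : α → ℝ≥0∞} {r : ℝ≥0∞} (hg : ∀ a, ∑' b, step a b * g b ≤ r * g a) (t : ℕ) :
    ∑' a, μ t a * g a ≤ r ^ t * ∑' a, μ 0 a * g a := by
  induction t with
  | zero => simp
  | succ t ih =>
    calc ∑' a, μ (t + 1) a * g a = ∑' a, μ t a * ∑' b, step a b * g b := by
          rw [hμ, PMF.tsum_bind_mul]
      _ ≤ ∑' a, μ t a * (r * g a) := ENNReal.tsum_le_tsum fun a => by gcongr; exact hg a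
      _ = r * ∑' a, μ t a * g a := by simp only [mul_left_comm, ENNReal.tsum_mul_left]
      _ ≤ r * (r ^ t * ∑' a, μ 0 a * g a) := by gcongr
      _ = r ^ (t + 1) * ∑' a, μ 0 a * g a := by ring

end MarkovChain

theorem mul_pow_le_rpow_neg {n q c : ℝ} (hn : 0 < n) (hq₀ : 0 < q) (hq₁ : q < 1) {t : ℕ}
    (ht : (c + 1) * Real.log n / Real.log q⁻¹ ≤ t) : n * q ^ t ≤ n ^ (-c) := by
  have hlogq : 0 < Real.log q⁻¹ := Real.log_pos ((one_lt_inv₀ hq₀).mpr hq₁)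
  rw [div_le_iff₀ hlogq, Real.log_inv] at ht
  rw [← Real.log_le_log_iff (by positivity) (by positivity), Real.log_mul hn.ne' (by positivity),
    Real.log_pow, Real.log_rpow hn]
  linarith

theorem Nat.sum_range_mul_choose_succ (n : ℕ) :
    ∑ b ∈ range (n + 2), b * (n + 1).choose b = (n + 1) * 2 ^ n := by
  rw [sum_range_succ', ← sum_range_choose, mul_sum]
  simp only [zero_mul, add_zero]
  exact sum_congr rfl fun b _ => by rw [mul_comm, Nat.add_one_mul_choose_eq]

/-- The number of leaders after a round of `LeaderElection` in which `b` of the `ℓ` leaders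
keep their flag. -/
def nextLeaders (ℓ b : ℕ) : ℕ := if 1 ≤ b then b else ℓ

theorem sum_range_choose_mul_nextLeaders_pred_add (k : ℕ) :
    ∑ b ∈ range (k + 2), (k + 1).choose b * (nextLeaders (k + 1) b - 1) + 2 ^ (k + 1)
      = (k + 1) * 2 ^ k + (k + 1) := by
  have hmean := Nat.sum_range_mul_choose_succ k
  have hcard := Nat.sum_range_choose (k + 1)
  rw [sum_range_succ'] at hmean hcard ⊢
  simp only [nextLeaders, Nat.le_add_left, nonpos_iff_eq_zero, one_ne_zero, if_true, if_false,
    Nat.add_sub_cancel, Nat.choose_zero_right, add_mul, one_mul, zero_mul, add_zero,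
    sum_add_distrib, mul_comm ((k + 1).choose _)] at hmean hcard ⊢
  omega

theorem four_mul_sum_range_choose_mul_nextLeaders_pred_le (ℓ : ℕ) :
    4 * ∑ b ∈ range (ℓ + 1), ℓ.choose b * (nextLeaders ℓ b - 1) ≤ 3 * (ℓ - 1) * 2 ^ ℓ := by
  rcases ℓ with _ | k
  · simp [nextLeaders]
  have hsum := sum_range_choose_mul_nextLeaders_pred_add k
  have hpow : k + 1 ≤ 2 ^ k := Nat.lt_two_pow_self
  rw [pow_succ] at hsum ⊢
  simp only [Nat.add_sub_cancel]
  nlinarith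

noncomputable def leaderStep (ℓ : ℕ) : PMF ℕ :=
  (PMF.binomial (1 / 2) (by norm_num) ℓ).map fun b : Fin (ℓ + 1) => nextLeaders ℓ b

theorem support_leaderStep_subset {ℓ : ℕ} (hℓ : 1 ≤ ℓ) :
    (leaderStep ℓ).support ⊆ {m | 1 ≤ m} := by
  rw [leaderStep, PMF.support_map]
  rintro _ ⟨b, -, rfl⟩
  dsimp only [nextLeaders, Set.mem_setOf_eq]
  split_ifs with hb <;> assumption

theorem tsum_leaderStep_mul_pred_le (ℓ : ℕ) :
    ∑' m, leaderStep ℓ m * ((m - 1 : ℕ) : ℝ≥0∞) ≤ 3 / 4 * ((ℓ - 1 : ℕ) : ℝ≥0∞) := by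
  have hsum : ∑' m, leaderStep ℓ m * ((m - 1 : ℕ) : ℝ≥0∞)
      = (2 ^ ℓ)⁻¹ * ((∑ b ∈ range (ℓ + 1), ℓ.choose b * (nextLeaders ℓ b - 1) : ℕ) : ℝ≥0∞) := by
    rw [leaderStep, PMF.tsum_map_mul, tsum_fintype, Nat.cast_sum, mul_sum,
      ← Fin.sum_univ_eq_sum_range]
    refine sum_congr rfl fun b _ => ?_
    rw [PMF.binomial_half_apply]
    push_cast
    ring
  have hbound := four_mul_sum_range_choose_mul_nextLeaders_pred_le ℓ
  rw [hsum]
  generalize ∑ b ∈ range (ℓ + 1), ℓ.choose b * (nextLeaders ℓ b - 1) = T at hbound ⊢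
  rw [ENNReal.inv_mul_le_iff (by positivity) (by simp),
    ← ENNReal.toReal_le_toReal (by simp) (by finiteness)]
  simp only [ENNReal.toReal_mul, ENNReal.toReal_natCast, ENNReal.toReal_pow, ENNReal.toReal_div,
    ENNReal.toReal_ofNat]
  have : (4 * T : ℝ) ≤ 3 * (ℓ - 1 : ℕ) * 2 ^ ℓ := by exact_mod_cast hbound
  linarith

theorem one_sub_pred_mul_pow_le_apply_one {μ : ℕ → PMF ℕ} {ℓ₀ : ℕ} (hℓ₀ : 1 ≤ ℓ₀)
    (hμ0 : μ 0 = PMF.pure ℓ₀) (hμs : ∀ t, μ (t + 1) = (μ t).bind leaderStep) (t : ℕ) :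
    1 - ((ℓ₀ - 1 : ℕ) : ℝ) * (3 / 4) ^ t ≤ (μ t 1).toReal := by
  have hsupp : (μ t).support ⊆ {m | 1 ≤ m} :=
    support_subset_of_succ_eq_bind hμs (by simpa [hμ0] using hℓ₀)
      (fun _ hℓ => support_leaderStep_subset hℓ) t
  have hpot : ∑' m, μ t m * ((m - 1 : ℕ) : ℝ≥0∞) ≤ (3 / 4) ^ t * ((ℓ₀ - 1 : ℕ) : ℝ≥0∞) := by
    simpa [hμ0] using tsum_mul_le_pow_mul_of_succ_eq_bind hμs tsum_leaderStep_mul_pred_le t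
  have hfin : (3 / 4 : ℝ≥0∞) ^ t * ((ℓ₀ - 1 : ℕ) : ℝ≥0∞) ≠ ⊤ :=
    ENNReal.mul_ne_top (ENNReal.pow_ne_top (ENNReal.div_ne_top (by simp) (by simp)))
      (ENNReal.natCast_ne_top _)
  have hmarkov := (μ t).one_sub_toReal_le_toReal_apply 1
    (fun m hm hm1 => Nat.one_le_cast.mpr (by have : 1 ≤ m := hsupp hm; omega)) hfin hpot
  rwa [ENNReal.toReal_mul, ENNReal.toReal_pow, ENNReal.toReal_natCast, ENNReal.toReal_div,
    ENNReal.toReal_ofNat, ENNReal.toReal_ofNat, mul_comm] at hmarkov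

/-- Markov chain model of the `LeaderElection` protocol. The step from
state `ℓ` is the law of `(if B ≥ 1 then B else ℓ)` where `B` is binomial with `ℓ` trials and
success probability `1/2`. Started from a point mass at `ℓ₀` with `1 ≤ ℓ₀ ≤ n`, the chain law
`μ_t` satisfies `μ_t({1}) ≥ 1 - n·(3/4)^t` for every `t`; in particular for every `c > 0` and
every `t ≥ (c+1)·ln n / ln(4/3)` we get `μ_t({1}) ≥ 1 - n^(-c)`. -/
theorem stmt3 (n ℓ₀ : ℕ) (hℓ₀ : 1 ≤ ℓ₀) (hℓ₀n : ℓ₀ ≤ n)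
    (step : ℕ → PMF ℕ)
    (hstep : ∀ ℓ, step ℓ =
      (PMF.binomial (1 / 2) (by norm_num) ℓ).map
        (fun b : Fin (ℓ + 1) => if 1 ≤ (b : ℕ) then (b : ℕ) else ℓ))
    (μ : ℕ → PMF ℕ) (hμ0 : μ 0 = PMF.pure ℓ₀) (hμs : ∀ t, μ (t + 1) = (μ t).bind step) :
    (∀ t : ℕ, 1 - (n : ℝ) * (3 / 4) ^ t ≤ ((μ t) 1).toReal) ∧
    (∀ c : ℝ, 0 < c → ∀ t : ℕ,
      (c + 1) * Real.log n / Real.log (4 / 3) ≤ (t : ℝ) →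
      1 - (n : ℝ) ^ (-c) ≤ ((μ t) 1).toReal) := by
  obtain rfl : step = leaderStep := funext hstep
  have part1 : ∀ t : ℕ, 1 - (n : ℝ) * (3 / 4) ^ t ≤ ((μ t) 1).toReal := fun t =>
    (one_sub_pred_mul_pow_le_apply_one hℓ₀ hμ0 hμs t).trans' <| by
      gcongr
      exact_mod_cast (by omega : ℓ₀ - 1 ≤ n)
  refine ⟨part1, fun c _ t ht => (part1 t).trans' ?_⟩
  have hn : (0 : ℝ) < n := by exact_mod_cast (by omega : 0 < n)
  have hq : (n : ℝ) * (3 / 4) ^ t ≤ (n : ℝ) ^ (-c) :=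
    mul_pow_le_rpow_neg hn (by norm_num) (by norm_num) (by norm_num [ht])
  linarith
end

section
/- Let k ≥ 1 be an integer and n > 1 a real number. Define z(t) = n·(1 + (k+1)t)^{−1/(k+1)} and x(t) = n·exp(1 − (1 + (k+1)t)^{1/(k+1)}) for t ≥ 0. Then x(0) = n and x is differentiable with x'(t) = −x(t)·(z(t)/n)^k for all t ≥ 0. Moreover, for every ε > 0, x(t) ≤ n^{1−ε} for all t ≥ (1 + ε·ln n)^{k+1}/(k+1); in particular, the X-count drops below n^{1−ε} within O((ln n)^{k+1}) time. -/
/-- The mean-field trajectory of the `(k+1)`-st order elimination dynamics: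
`z(t) = n·(1 + (k+1)t)^(-1/(k+1))`. -/
noncomputable def meanFieldZ (k : ℕ) (n t : ℝ) : ℝ :=
  n * (1 + ((k : ℝ) + 1) * t) ^ (-(1 : ℝ) / ((k : ℝ) + 1))

/-- The mean-field trajectory of the control-state count in the fast junta-creation
protocol: `x(t) = n·exp(1 - (1 + (k+1)t)^(1/(k+1)))`. -/
noncomputable def meanFieldXJunta (k : ℕ) (n t : ℝ) : ℝ :=
  n * Real.exp (1 - (1 + ((k : ℝ) + 1) * t) ^ ((1 : ℝ) / ((k : ℝ) + 1)))

/-!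
With `r(t) = (1 + (k+1)t)^(1/(k+1))` one has `z = n / r` and `x = n·exp(1 - r)`. Differentiating
`r^(k+1) = 1 + (k+1)t` gives `r' = r^(-k) = (z/n)^k`, which is exactly the ODE for `x`. For the
threshold, `t ≥ a^(k+1)/(k+1)` with `a = 1 + ε·ln n` forces `r(t) ≥ a`, hence
`x(t) ≤ n·exp(-ε·ln n) = n^(1-ε)`.
-/

open Real

noncomputable def meanFieldRoot (k : ℕ) (t : ℝ) : ℝ :=
  (1 + ((k : ℝ) + 1) * t) ^ ((1 : ℝ) / ((k : ℝ) + 1))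

section MeanFieldRoot

variable (k : ℕ)

theorem meanFieldRoot_zero : meanFieldRoot k 0 = 1 := by
  simp [meanFieldRoot]

theorem meanFieldXJunta_eq (n t : ℝ) : meanFieldXJunta k n t = n * exp (1 - meanFieldRoot k t) :=
  rfl

theorem meanFieldZ_div_eq {n t : ℝ} (hn : n ≠ 0) (ht : 0 ≤ 1 + ((k : ℝ) + 1) * t) :
    meanFieldZ k n t / n = (meanFieldRoot k t)⁻¹ := by
  rw [meanFieldZ, mul_div_cancel_left₀ _ hn, neg_div, rpow_neg ht, meanFieldRoot]

theorem hasDerivAt_meanFieldRoot {t : ℝ} (ht : 0 < 1 + ((k : ℝ) + 1) * t) :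
    HasDerivAt (meanFieldRoot k) ((meanFieldRoot k t)⁻¹ ^ k) t := by
  have hc : (k : ℝ) + 1 ≠ 0 := by positivity
  have hlin : HasDerivAt (fun s : ℝ => 1 + ((k : ℝ) + 1) * s) ((k : ℝ) + 1) t := by
    simpa using ((hasDerivAt_id t).const_mul ((k : ℝ) + 1)).const_add 1
  refine ((hasDerivAt_rpow_const (p := 1 / ((k : ℝ) + 1)) (Or.inl ht.ne')).comp t hlin
    ).congr_deriv ?_
  rw [meanFieldRoot, ← rpow_neg ht.le, ← rpow_natCast, ← rpow_mul ht.le]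
  have hexp : -(1 / ((k : ℝ) + 1)) * k = 1 / ((k : ℝ) + 1) - 1 := by
    field_simp
    ring
  rw [hexp, mul_comm (1 / ((k : ℝ) + 1)), mul_assoc, one_div_mul_cancel hc, mul_one]

theorem le_meanFieldRoot {a t : ℝ} (ha : 0 ≤ a) (h : a ^ (k + 1) / ((k : ℝ) + 1) ≤ t) :
    a ≤ meanFieldRoot k t := by
  have hc : (0 : ℝ) < (k : ℝ) + 1 := by positivity
  have ht : 0 ≤ t := le_trans (by positivity) h
  have hpow : a ^ ((k : ℝ) + 1) ≤ 1 + ((k : ℝ) + 1) * t := by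
    rw [show (k : ℝ) + 1 = ((k + 1 : ℕ) : ℝ) by push_cast; ring, rpow_natCast]
    push_cast
    have := (div_le_iff₀ hc).mp h
    linarith
  rw [meanFieldRoot, one_div]
  exact (le_rpow_inv_iff_of_pos ha (by positivity) hc).mpr hpow

end MeanFieldRoot

theorem mul_exp_neg_mul_log {n : ℝ} (hn : 0 < n) (ε : ℝ) :
    n * exp (-(ε * log n)) = n ^ (1 - ε) := by
  rw [rpow_sub hn, rpow_one, rpow_def_of_pos hn, exp_neg, div_eq_mul_inv, mul_comm ε]

theorem stmt13_general (k : ℕ) (n : ℝ) (hn : 1 < n) :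
    meanFieldXJunta k n 0 = n ∧
    (∀ t : ℝ, 0 ≤ t →
      HasDerivAt (meanFieldXJunta k n)
        (-(meanFieldXJunta k n t) * (meanFieldZ k n t / n) ^ k) t) ∧
    (∀ ε : ℝ, 0 < ε → ∀ t : ℝ,
      (1 + ε * Real.log n) ^ (k + 1) / ((k : ℝ) + 1) ≤ t →
      meanFieldXJunta k n t ≤ n ^ ((1 : ℝ) - ε)) := by
  have hn0 : 0 < n := by linarith
  refine ⟨by simp [meanFieldXJunta_eq, meanFieldRoot_zero], fun t ht => ?_,
    fun ε hε t ht => ?_⟩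
  · have hu : 0 < 1 + ((k : ℝ) + 1) * t := by positivity
    rw [meanFieldZ_div_eq k hn0.ne' hu.le]
    refine (((hasDerivAt_meanFieldRoot k hu).const_sub 1).exp.const_mul n).congr_deriv ?_
    rw [meanFieldXJunta_eq]
    ring
  · have ha : 0 ≤ 1 + ε * log n := by have := log_pos hn; positivity
    calc meanFieldXJunta k n t = n * exp (1 - meanFieldRoot k t) := meanFieldXJunta_eq k n t
      _ ≤ n * exp (1 - (1 + ε * log n)) := by gcongr; exact le_meanFieldRoot k ha ht
      _ = n ^ (1 - ε) := by rw [← mul_exp_neg_mul_log hn0]; ring_nf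

/-- Let `k ≥ 1`, `n > 1`, `z(t) = n·(1+(k+1)t)^(-1/(k+1))` and
`x(t) = n·exp(1 - (1+(k+1)t)^(1/(k+1)))`. Then `x(0) = n`, `x` is differentiable with
`x'(t) = -x(t)·(z(t)/n)^k` for all `t ≥ 0`, and for every `ε > 0` we have `x(t) ≤ n^(1-ε)`
for all `t ≥ (1 + ε·ln n)^(k+1)/(k+1)`. -/
theorem stmt13 (k : ℕ) (hk : 1 ≤ k) (n : ℝ) (hn : 1 < n) :
    meanFieldXJunta k n 0 = n ∧
    (∀ t : ℝ, 0 ≤ t →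
      HasDerivAt (meanFieldXJunta k n)
        (-(meanFieldXJunta k n t) * (meanFieldZ k n t / n) ^ k) t) ∧
    (∀ ε : ℝ, 0 < ε → ∀ t : ℝ,
      (1 + ε * Real.log n) ^ (k + 1) / ((k : ℝ) + 1) ≤ t →
      meanFieldXJunta k n t ≤ n ^ ((1 : ℝ) - ε)) :=
  stmt13_general k n hn
end
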